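/- arXiv:1905.04209 — 11 statements merged into one kernel-verified Lean document; each statement's English description precedes it below -/
import Mathlib

section
/- Let I be a binary CSP instance satisfying the DE-snake property on variable x_i, and let I' be the instance obtained from I by eliminating x_i (deleting from each other domain the values with no support at x_i, then removing x_i and its constraints). Then I is satisfiable if and only if I' is satisfiable. -/
universe u v

/-- A binary CSP instance: finite domains and binary relations with
`rel j i` the transpose of `rel i j`. -/
structure BinCSP (V : Type u) (α : Type v) where
  dom : V → Set α
  rel : V → V → α → α → Prop
  finDom : ∀ i, (dom i).Finite
  symm : ∀ i j a b, rel i j a b ↔ rel j i b a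

namespace BinCSP

variable {V : Type u} {α : Type v}

/-- A solution assigns to each variable a domain value so that all binary
relations are satisfied. -/
def IsSol (I : BinCSP V α) (s : V → α) : Prop :=
  (∀ i, s i ∈ I.dom i) ∧ ∀ i j, i ≠ j → I.rel i j (s i) (s j)

/-- The instance obtained by eliminating variable `i`: each other domain is
restricted to values supported at `i`, then `i` and its constraints are removed. -/
def elim (I : BinCSP V α) (i : V) : BinCSP {j : V // j ≠ i} α where
  dom j := {v | v ∈ I.dom j.1 ∧ ∃ w ∈ I.dom i, I.rel j.1 i v w}
  rel j k a b := I.rel j.1 k.1 a b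
  finDom j := (I.finDom j.1).subset fun _ hv => hv.1
  symm j k a b := I.symm j.1 k.1 a b

/-- The sub-instance on `X \ {i}` (same domains, constraints restricted). -/
def sub (I : BinCSP V α) (i : V) : BinCSP {j : V // j ≠ i} α where
  dom j := I.dom j.1
  rel j k a b := I.rel j.1 k.1 a b
  finDom j := I.finDom j.1
  symm j k a b := I.symm j.1 k.1 a b

/-- The DE-snake property on variable `i`. -/
def DESnake (I : BinCSP V α) (i : V) : Prop :=
  ∃ vi ∈ I.dom i, ∀ j, j ≠ i → ∀ vj ∈ I.dom j, ¬ I.rel i j vi vj →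
    ∃ vj' ∈ I.dom j, I.rel j i vj' vi ∧
      ∀ k, k ≠ i → k ≠ j → ∀ vk ∈ I.dom k,
        ¬ (I.rel j k vj vk ∧ ¬ I.rel j k vj' vk)

/-- the DE-snake property is a satisfiability-conserving
variable-elimination condition. -/
theorem DESnake_elim_sat (I : BinCSP V α) (i : V) (h : DESnake I i) :
    (∃ s : V → α, I.IsSol s) ↔ (∃ s' : {j : V // j ≠ i} → α, (I.elim i).IsSol s') := by

  classical
  obtain ⟨vi, hvi, hsnake⟩ := h
  constructor
  · rintro ⟨s, hdom, hrel⟩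
    exact ⟨fun j => s j.1,
      fun j => ⟨hdom j.1, s i, hdom i, hrel j.1 i j.2⟩,
      fun j k hjk => hrel j.1 k.1 (fun e => hjk (Subtype.ext e))⟩
  · rintro ⟨s', hdom', hrel'⟩
    -- replaced value for each j ≠ i
    let t : {j : V // j ≠ i} → α := fun j =>
      if hc : I.rel i j.1 vi (s' j) then s' j
      else Classical.choose (hsnake j.1 j.2 (s' j) (hdom' j).1 hc)
    have ht : ∀ j : {j : V // j ≠ i}, t j ∈ I.dom j.1 ∧ I.rel j.1 i (t j) vi ∧
        (∀ k, k ≠ i → k ≠ j.1 → ∀ vk ∈ I.dom k,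
          I.rel j.1 k (s' j) vk → I.rel j.1 k (t j) vk) := by
      intro j
      by_cases hc : I.rel i j.1 vi (s' j)
      · refine ⟨?_, ?_, ?_⟩
        · simp only [t, dif_pos hc]; exact (hdom' j).1
        · simp only [t, dif_pos hc]; exact (I.symm i j.1 vi (s' j)).mp hc
        · intro k _ _ vk _ hr
          simpa only [t, dif_pos hc] using hr
      · obtain ⟨hd, hr, hall⟩ :=
          Classical.choose_spec (hsnake j.1 j.2 (s' j) (hdom' j).1 hc)
        refine ⟨?_, ?_, ?_⟩
        · simpa only [t, dif_neg hc] using hd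
        · simpa only [t, dif_neg hc] using hr
        · intro k hki hkj vk hvk hrel2
          have := hall k hki hkj vk hvk
          simp only [t, dif_neg hc]
          by_contra hb
          exact this ⟨hrel2, hb⟩
    refine ⟨fun v => if hv : v = i then vi else t ⟨v, hv⟩, fun v => ?_, ?_⟩
    · by_cases hv : v = i
      · simpa [hv] using hvi
      · simpa [hv] using (ht ⟨v, hv⟩).1
    · intro j k hjk
      by_cases hj : j = i
      · have hk : k ≠ i := fun e => hjk (hj.trans e.symm)
        simp only [dif_pos hj, dif_neg hk]
        rw [hj]
        exact (I.symm k i (t ⟨k, hk⟩) vi).mp (ht ⟨k, hk⟩).2.1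
      · by_cases hk : k = i
        · simp only [dif_neg hj, dif_pos hk]
          rw [hk]
          exact (ht ⟨j, hj⟩).2.1
        · simp only [dif_neg hj, dif_neg hk]
          have hne : (⟨j, hj⟩ : {j : V // j ≠ i}) ≠ ⟨k, hk⟩ :=
            fun e => hjk (congrArg Subtype.val e)
          have h0 : I.rel j k (s' ⟨j, hj⟩) (s' ⟨k, hk⟩) := hrel' ⟨j, hj⟩ ⟨k, hk⟩ hne
          have h1 : I.rel j k (t ⟨j, hj⟩) (s' ⟨k, hk⟩) :=
            (ht ⟨j, hj⟩).2.2 k hk hjk.symm (s' ⟨k, hk⟩) (hdom' ⟨k, hk⟩).1 h0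
          have h2 : I.rel k j (s' ⟨k, hk⟩) (t ⟨j, hj⟩) := (I.symm j k _ _).mp h1
          have h3 : I.rel k j (t ⟨k, hk⟩) (t ⟨j, hj⟩) :=
            (ht ⟨k, hk⟩).2.2 j hj hjk (t ⟨j, hj⟩) (ht ⟨j, hj⟩).1 h2
          exact (I.symm k j _ _).mp h3


end BinCSP
end

section
/- Let I be a binary CSP instance whose variable x_i satisfies the DE-snake property witnessed by value v_i ∈ D(x_i), and let s' be any solution to the instance I' obtained by eliminating x_i. Define s by: s(x_i) = v_i; s(x_j) = s'(x_j) if (s'(x_j), v_i) ∈ R_{ji}; and otherwise s(x_j) = u_j(s'(x_j)), where u_j(v_j) is the value v'_j guaranteed by the DE-snake property for v_j. Then s is a solution to I. -/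
universe u v

namespace BinCSP

variable {V : Type u} {α : Type v}

/-- explicit construction of a solution of `I` from a solution of
the instance obtained by eliminating `x_i`, under the DE-snake property with
witness `vi` and choice function `u`. -/
theorem DESnake_extend (I : BinCSP V α) (i : V) (vi : α) (hvi : vi ∈ I.dom i)
    (u : V → α → α)
    (hu : ∀ j, j ≠ i → ∀ vj ∈ I.dom j, ¬ I.rel i j vi vj →
      u j vj ∈ I.dom j ∧ I.rel j i (u j vj) vi ∧
        ∀ k, k ≠ i → k ≠ j → ∀ vk ∈ I.dom k, I.rel j k vj vk → I.rel j k (u j vj) vk)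
    (s' : {j : V // j ≠ i} → α) (hs' : (I.elim i).IsSol s')
    (s : V → α) (hsi : s i = vi)
    (hs : ∀ j (hj : j ≠ i),
      (I.rel j i (s' ⟨j, hj⟩) vi → s j = s' ⟨j, hj⟩) ∧
      (¬ I.rel j i (s' ⟨j, hj⟩) vi → s j = u j (s' ⟨j, hj⟩))) :
    I.IsSol s := by
  have key : ∀ j (hj : j ≠ i), s j ∈ I.dom j ∧ I.rel j i (s j) vi ∧
      ∀ k, k ≠ i → k ≠ j → ∀ vk ∈ I.dom k,
        I.rel j k (s' ⟨j, hj⟩) vk → I.rel j k (s j) vk := by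
    intro j hj
    have hdom : s' ⟨j, hj⟩ ∈ I.dom j := (hs'.1 ⟨j, hj⟩).1
    by_cases hr : I.rel j i (s' ⟨j, hj⟩) vi
    · have he : s j = s' ⟨j, hj⟩ := (hs j hj).1 hr
      rw [he]
      exact ⟨hdom, hr, fun k _ _ vk _ h => h⟩
    · have he : s j = u j (s' ⟨j, hj⟩) := (hs j hj).2 hr
      have hnr : ¬ I.rel i j vi (s' ⟨j, hj⟩) := fun h => hr ((I.symm i j vi _).mp h)
      obtain ⟨h1, h2, h3⟩ := hu j hj _ hdom hnr
      rw [he]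
      exact ⟨h1, h2, h3⟩
  constructor
  · intro j
    by_cases hj : j = i
    · subst hj; rw [hsi]; exact hvi
    · exact (key j hj).1
  · intro j k hjk
    by_cases hj : j = i
    · subst hj
      have hk : k ≠ j := fun h => hjk h.symm
      rw [hsi]
      exact (I.symm k j (s k) vi).mp (key k hk).2.1
    · by_cases hk : k = i
      · subst hk
        rw [hsi]
        exact (key j hj).2.1
      · have hrel : I.rel j k (s' ⟨j, hj⟩) (s' ⟨k, hk⟩) :=
          hs'.2 ⟨j, hj⟩ ⟨k, hk⟩ (fun h => hjk (congrArg Subtype.val h))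
        have step1 : I.rel k j (s k) (s' ⟨j, hj⟩) :=
          (key k hk).2.2 j hj hjk _ (hs'.1 ⟨j, hj⟩).1
            ((I.symm j k _ _).mp hrel)
        exact (key j hj).2.2 k hk (Ne.symm hjk) (s k) (key k hk).1
          ((I.symm k j _ _).mp step1)

end BinCSP
end

section
/- Let I be a binary CSP instance satisfying the triangle property on variable x_i, and let I' be the instance obtained by eliminating x_i. Then any solution s' of I' extends to a solution s of I by setting s(x_i) = v_i(s'(x_j)), where x_j is the witnessing variable and v_i(·) the witnessing choice function of the triangle property. In particular, I is satisfiable if and only if I' is satisfiable. -/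
universe u v

namespace BinCSP

variable {V : Type u} {α : Type v}

/-- The triangle property on variable `i`. -/
def Triangle (I : BinCSP V α) (i : V) : Prop :=
  ∃ j, j ≠ i ∧ ∀ vj ∈ I.dom j, ∃ vi ∈ I.dom i, I.rel i j vi vj ∧
    ∀ k, k ≠ i → k ≠ j → ∀ vk ∈ I.dom k, I.rel j k vj vk → I.rel i k vi vk

/-- under the triangle property on `x_i` with witnessing variable
`x_j` and choice function `vf`, any solution `s'` of the eliminated instance
extends to a solution of `I` by assigning `vf (s' x_j)` to `x_i`; in
particular elimination conserves satisfiability. -/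
theorem triangle_extend [DecidableEq V] (I : BinCSP V α) (i j : V) (hj : j ≠ i)
    (vf : α → α)
    (hvf : ∀ vj ∈ I.dom j, vf vj ∈ I.dom i ∧ I.rel i j (vf vj) vj ∧
      ∀ k, k ≠ i → k ≠ j → ∀ vk ∈ I.dom k, I.rel j k vj vk → I.rel i k (vf vj) vk) :
    (∀ s' : {p : V // p ≠ i} → α, (I.elim i).IsSol s' →
      I.IsSol (fun x => if h : x = i then vf (s' ⟨j, hj⟩) else s' ⟨x, h⟩)) ∧
    ((∃ s : V → α, I.IsSol s) ↔ ∃ t : {p : V // p ≠ i} → α, (I.elim i).IsSol t) := by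

  have main : ∀ s' : {p : V // p ≠ i} → α, (I.elim i).IsSol s' →
      I.IsSol (fun x => if h : x = i then vf (s' ⟨j, hj⟩) else s' ⟨x, h⟩) := by
    intro s' hs'
    obtain ⟨hdom, hrel⟩ := hs'
    have hjdom : s' ⟨j, hj⟩ ∈ I.dom j := (hdom ⟨j, hj⟩).1
    obtain ⟨hvi, hrij, htri⟩ := hvf _ hjdom
    constructor
    · intro x
      by_cases h : x = i
      · subst h; simp [hvi]
      · simpa [h] using (hdom ⟨x, h⟩).1
    · intro a b hab
      by_cases ha : a = i
      · have hb : b ≠ i := fun h => hab (ha.trans h.symm)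
        simp only [dif_pos ha, dif_neg hb]
        rw [ha]
        by_cases hbj : b = j
        · subst hbj; exact hrij
        · exact htri b hb hbj _ (hdom ⟨b, hb⟩).1
            (hrel ⟨j, hj⟩ ⟨b, hb⟩ (by simp [Subtype.ext_iff, Ne.symm hbj]))
      · by_cases hbi : b = i
        · simp only [dif_neg ha, dif_pos hbi]
          rw [hbi, I.symm]
          by_cases haj : a = j
          · subst haj; exact hrij
          · exact htri a ha haj _ (hdom ⟨a, ha⟩).1
              (hrel ⟨j, hj⟩ ⟨a, ha⟩ (by simp [Subtype.ext_iff, Ne.symm haj]))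
        · simp only [dif_neg ha, dif_neg hbi]
          exact hrel ⟨a, ha⟩ ⟨b, hbi⟩ (by simp [Subtype.ext_iff, hab])
  refine ⟨main, ⟨?_, ?_⟩⟩
  · rintro ⟨s, hsd, hsr⟩
    refine ⟨fun p => s p.1, ?_, ?_⟩
    · intro p
      exact ⟨hsd p.1, s i, hsd i, hsr p.1 i p.2⟩
    · intro p q hpq
      exact hsr p.1 q.1 (fun h => hpq (Subtype.ext h))
  · rintro ⟨t, ht⟩
    exact ⟨_, main t ht⟩


end BinCSP
end

section
/- Let I be a binary CSP instance with at least k variables (k ≥ 2) satisfying the ∀∃ broken k-dimensional polyhedron property on variable x_m. Then any solution to the sub-instance I_{-m} obtained by removing variable x_m (and its constraints) extends to a solution of I by assigning some value to x_m. In particular, eliminating x_m preserves satisfiability. -/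
/-! Fix a solution `s` of the sub-instance and pick `k - 1` other variables whose set of values
for `x_m` compatible with `s` is ⊆-minimal; let `vm` be the value the ∀∃ property provides for
them. If some `x_j` rejected `vm`, then for some position `a` of the tuple every value
compatible with `x_j` and the other positions is compatible with position `a`: otherwise such
values, one per position, together with `vm` would be the apexes of a broken `k`-dimensional
polyhedron with apex `vm`. Swapping `x_j` in at `a` then shrinks the compatible set strictly
(it loses `vm`), contradicting minimality. So `vm` extends `s`. -/

universe u v

namespace BinCSP

variable {V : Type u} {α : Type v}

/-- A broken `n`-dimensional polyhedron on variable `m`, with base the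
consistent assignment `v` to the distinct variables `idx` (all `≠ m`) and
distinct apexes `u` in the domain of `m`. -/
def BrokenPoly {n : ℕ} (I : BinCSP V α) (m : V)
    (idx : Fin n → V) (v u : Fin n → α) : Prop :=
  Function.Injective idx ∧ (∀ a, idx a ≠ m) ∧ (∀ a, v a ∈ I.dom (idx a)) ∧
    (∀ a b, a ≠ b → I.rel (idx a) (idx b) (v a) (v b)) ∧
    Function.Injective u ∧ (∀ a, u a ∈ I.dom m) ∧
    (∀ a, ¬ I.rel (idx a) m (v a) (u a)) ∧
    (∀ a b, a ≠ b → I.rel (idx a) m (v a) (u b))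

/-- The ∀∃ broken `k`-dimensional polyhedron property on variable `m`. -/
def AEPoly (I : BinCSP V α) (m : V) (k : ℕ) : Prop :=
  ∀ p : ℕ, p + 1 = k →
    ∀ idx : Fin p → V, Function.Injective idx → (∀ a, idx a ≠ m) →
    ∀ v : Fin p → α, (∀ a, v a ∈ I.dom (idx a)) →
      (∀ a b, a ≠ b → I.rel (idx a) (idx b) (v a) (v b)) →
    ∃ vm ∈ I.dom m, (∀ a, I.rel (idx a) m (v a) vm) ∧
      ∀ ik, ik ≠ m → (∀ a, ik ≠ idx a) → ∀ vk ∈ I.dom ik,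
        ∀ u : Fin (p + 1) → α,
          ¬ (BrokenPoly I m (Fin.snoc idx ik) (Fin.snoc v vk) u ∧ ∃ a, u a = vm)

theorem _root_.Function.Injective.update_of_notMem_range {ι β : Type*} [DecidableEq ι]
    {f : ι → β} (hf : Function.Injective f) (i : ι) {b : β} (hb : b ∉ Set.range f) :
    Function.Injective (Function.update f i b) := by
  intro x y hxy
  by_cases hx : x = i <;> by_cases hy : y = i
  · rw [hx, hy]
  · rw [hx, Function.update_self, Function.update_of_ne hy] at hxy
    exact absurd ⟨y, hxy.symm⟩ hb
  · rw [hy, Function.update_self, Function.update_of_ne hx] at hxy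
    exact absurd ⟨x, hxy⟩ hb
  · rw [Function.update_of_ne hx, Function.update_of_ne hy] at hxy
    exact hf hxy

section Extension

variable (I : BinCSP V α) {m : V} {s : {j : V // j ≠ m} → α}

def compatibleValues (s : {j : V // j ≠ m} → α) {p : ℕ} (f : Fin p → {j : V // j ≠ m}) :
    Set α :=
  {w | w ∈ I.dom m ∧ ∀ a, I.rel (f a) m (s (f a)) w}

theorem brokenPoly_of_isSol (hs : (I.sub m).IsSol s) {n : ℕ} {g : Fin n → {j : V // j ≠ m}}
    (hg : Function.Injective g) {u : Fin n → α} (hu : ∀ a, u a ∈ I.dom m)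
    (hu_not : ∀ a, ¬ I.rel (g a) m (s (g a)) (u a))
    (hu_rel : ∀ a b, a ≠ b → I.rel (g a) m (s (g a)) (u b)) :
    BrokenPoly I m (Subtype.val ∘ g) (s ∘ g) u := by
  refine ⟨Subtype.val_injective.comp hg, fun a => (g a).2, fun a => hs.1 (g a),
    fun a b hab => hs.2 _ _ (hg.ne hab), fun a b hab => ?_, hu, hu_not, hu_rel⟩
  by_contra hne
  exact hu_not a (hab ▸ hu_rel a b hne)

theorem exists_compatibleValues_update_subset (hs : (I.sub m).IsSol s) {p : ℕ}
    {f : Fin p → {j : V // j ≠ m}} (hf : Function.Injective f) {j : {j : V // j ≠ m}}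
    (hj : j ∉ Set.range f) {vm : α} (hvm : vm ∈ compatibleValues I s f)
    (hj_vm : ¬ I.rel j m (s j) vm)
    (hno : ∀ u : Fin (p + 1) → α,
      ¬ (BrokenPoly I m (Fin.snoc (Subtype.val ∘ f) j.1) (Fin.snoc (s ∘ f) (s j)) u ∧
        ∃ a, u a = vm)) :
    ∃ a, compatibleValues I s (Function.update f a j) ⊆ compatibleValues I s f := by
  classical
  by_contra! hA
  simp only [Set.not_subset] at hA
  choose w hw_upd hw_not using hA
  have hw_dom (a) : w a ∈ I.dom m := (hw_upd a).1
  have hw_rel (a b) (hab : b ≠ a) : I.rel (f b) m (s (f b)) (w a) := by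
    simpa [Function.update_of_ne hab] using (hw_upd a).2 b
  have hw_j (a) : I.rel j m (s j) (w a) := by simpa using (hw_upd a).2 a
  have hw_bad (a) : ¬ I.rel (f a) m (s (f a)) (w a) := fun h =>
    hw_not a ⟨hw_dom a, fun b => if hb : b = a then hb ▸ h else hw_rel a b hb⟩
  refine hno (Fin.snoc w vm) ⟨?_, Fin.last p, Fin.snoc_last _ _⟩
  rw [← Fin.comp_snoc, ← Fin.comp_snoc]
  refine brokenPoly_of_isSol I hs (Fin.snoc_injective_of_injective hf hj) (fun a => ?_)
    (fun a => ?_) (fun a b hab => ?_)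
  · induction a using Fin.lastCases <;> simp [hw_dom, hvm.1]
  · induction a using Fin.lastCases <;> simp [hw_bad, hj_vm]
  · induction a using Fin.lastCases with
    | last =>
      induction b using Fin.lastCases with
      | last => exact absurd rfl hab
      | cast b => simpa using hw_j b
    | cast a =>
      induction b using Fin.lastCases with
      | last => simpa using hvm.2 a
      | cast b => simpa using hw_rel b a fun h => hab (h ▸ rfl)

theorem exists_compatible_of_aePoly [Fintype V] (hs : (I.sub m).IsSol s) {p : ℕ}
    (h : I.AEPoly m (p + 1)) (hp : p + 1 ≤ Fintype.card V) :
    ∃ vm ∈ I.dom m, ∀ j : {j : V // j ≠ m}, I.rel j m (s j) vm := by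
  classical
  obtain ⟨e⟩ : Nonempty (Fin p ↪ {j : V // j ≠ m}) :=
    Function.Embedding.nonempty_of_card_le <| by
      simp only [Fintype.card_fin, Fintype.card_subtype_compl, Fintype.card_unique]
      omega
  obtain ⟨f, hf, hf_min⟩ := Set.Finite.exists_minimalFor (compatibleValues I s)
    {f : Fin p → {j : V // j ≠ m} | Function.Injective f} (Set.toFinite _) ⟨e, e.injective⟩
  obtain ⟨vm, hvm_dom, hvm_rel, hno⟩ := h p rfl (Subtype.val ∘ f)
    (Subtype.val_injective.comp hf) (fun a => (f a).2) (s ∘ f) (fun a => hs.1 (f a))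
    (fun a b hab => hs.2 _ _ (hf.ne hab))
  have hvm : vm ∈ compatibleValues I s f := ⟨hvm_dom, hvm_rel⟩
  refine ⟨vm, hvm_dom, fun j => ?_⟩
  by_contra hj_vm
  have hj : j ∉ Set.range f := by
    rintro ⟨a, rfl⟩
    exact hj_vm (hvm_rel a)
  have hj_val (a) : j.1 ≠ (f a).1 := fun h => hj ⟨a, (Subtype.ext h).symm⟩
  obtain ⟨a, hsub⟩ := exists_compatibleValues_update_subset I hs hf hj hvm hj_vm
    (hno j.1 j.2 hj_val (s j) (hs.1 j))
  have hvm' := hf_min (hf.update_of_notMem_range a hj) hsub hvm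
  exact hj_vm (by simpa using hvm'.2 a)

theorem IsSol.restrict {s : V → α} (hs : I.IsSol s) : (I.sub m).IsSol fun j => s j :=
  ⟨fun j => hs.1 j, fun i j hij => hs.2 i j fun h => hij (Subtype.ext h)⟩

theorem isSol_extend [DecidableEq V] (hs : (I.sub m).IsSol s)
    {vm : α} (hvm : vm ∈ I.dom m) (hvm_rel : ∀ j : {j : V // j ≠ m}, I.rel j m (s j) vm) :
    I.IsSol fun j => if hj : j = m then vm else s ⟨j, hj⟩ := by
  refine ⟨fun i => ?_, fun i j hij => ?_⟩
  · by_cases hi : i = m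
    · subst hi; simpa using hvm
    · simpa [hi, sub] using hs.1 ⟨i, hi⟩
  · by_cases hi : i = m <;> by_cases hj : j = m
    · exact absurd (hi.trans hj.symm) hij
    · subst hi; simpa [hj] using (I.symm _ _ _ _).mp (hvm_rel ⟨j, hj⟩)
    · subst hj; simpa [hi] using hvm_rel ⟨i, hi⟩
    · simpa [hi, hj, sub] using hs.2 ⟨i, hi⟩ ⟨j, hj⟩ fun h => hij (congrArg Subtype.val h)

end Extension

/-- the ∀∃ broken `k`-dimensional polyhedron property is a
(solution-conserving) variable-elimination condition in instances with at
least `k` variables. -/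
theorem AEPoly_extend [Fintype V] (I : BinCSP V α) (m : V) (k : ℕ)
    (hk : 2 ≤ k) (hcard : k ≤ Fintype.card V) (h : AEPoly I m k) :
    (∀ s' : {j : V // j ≠ m} → α, (I.sub m).IsSol s' →
      ∃ s : V → α, I.IsSol s ∧ ∀ j (hj : j ≠ m), s j = s' ⟨j, hj⟩) ∧
    ((∃ s : V → α, I.IsSol s) ↔ ∃ t : {j : V // j ≠ m} → α, (I.sub m).IsSol t) := by
  classical
  obtain ⟨p, rfl⟩ : ∃ p, k = p + 1 := ⟨k - 1, by omega⟩
  have extend (s' : {j : V // j ≠ m} → α) (hs' : (I.sub m).IsSol s') :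
      ∃ s : V → α, I.IsSol s ∧ ∀ j (hj : j ≠ m), s j = s' ⟨j, hj⟩ := by
    obtain ⟨vm, hvm, hvm_rel⟩ := exists_compatible_of_aePoly I hs' h hcard
    exact ⟨_, isSol_extend I hs' hvm hvm_rel, fun j hj => dif_neg hj⟩
  refine ⟨extend, fun ⟨s, hs⟩ => ⟨_, hs.restrict I⟩, fun ⟨t, ht⟩ => ?_⟩
  obtain ⟨s, hs, -⟩ := extend t ht
  exact ⟨s, hs⟩

end BinCSP
end

section
/- Let I be an arc-consistent binary CSP instance with at least 2 variables satisfying the ∀∃ broken-triangle property (∀∃BTP, i.e., the ∀∃ broken k-dimensional polyhedron property with k = 2) on variable x_m. Then every solution of the sub-instance I_{-m} on X \ {x_m} extends to a solution of I. -/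
/-!
Choose a value of `x_m` whose set of supporters (the variables `j ≠ m` whose assigned value is
compatible with it) is maximal for inclusion. If some `x_i` did not support it, the ∀∃BTP value
`v_m` for the assignment of `x_i` would be supported by `x_i` and by every supporter `x_j` of the
chosen value, since otherwise the two values and the assignments of `x_i`, `x_j` would form a
broken triangle with apex `v_m`. This contradicts maximality, so the chosen value extends the
solution.
-/

universe u v

namespace BinCSP

variable {V : Type u} {α : Type v}

/-- A broken triangle on variable `m` with base `⟨vi, vj⟩` (to the distinct
variables `i, j ≠ m`) and apexes `u` (compatible with `vi`) and `u'`
(compatible with `vj`). -/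
def BrokenTri (I : BinCSP V α) (m i j : V) (vi vj u u' : α) : Prop :=
  i ≠ m ∧ j ≠ m ∧ i ≠ j ∧ vi ∈ I.dom i ∧ vj ∈ I.dom j ∧
    u ∈ I.dom m ∧ u' ∈ I.dom m ∧
    I.rel i j vi vj ∧ I.rel i m vi u ∧ I.rel j m vj u' ∧
    ¬ I.rel i m vi u' ∧ ¬ I.rel j m vj u

/-- Arc consistency: every value of every variable has a support at every
other variable. -/
def ArcConsistent (I : BinCSP V α) : Prop :=
  ∀ i j, i ≠ j → ∀ v ∈ I.dom i, ∃ w ∈ I.dom j, I.rel i j v w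

/-- The ∀∃ broken-triangle property (∀∃BTP) on variable `m`: every value `vi`
of every other variable has a support `vm` at `m` such that no broken triangle
on `m` has base containing `vi` and `vm` as one of its apexes. -/
def AEBTP (I : BinCSP V α) (m : V) : Prop :=
  ∀ i, i ≠ m → ∀ vi ∈ I.dom i, ∃ vm ∈ I.dom m, I.rel i m vi vm ∧
    ∀ j, j ≠ i → j ≠ m → ∀ vj ∈ I.dom j, ∀ u u' : α,
      ¬ (BrokenTri I m i j vi vj u u' ∧ (vm = u ∨ vm = u'))

def supporters (I : BinCSP V α) (m : V) (s : {j : V // j ≠ m} → α) (u : α) :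
    Set {j : V // j ≠ m} :=
  {j | I.rel j m (s j) u}

variable {I : BinCSP V α} {m : V}

theorem AEBTP.supporters_ssubset {s : {j : V // j ≠ m} → α} (h : AEBTP I m)
    (hs : (I.sub m).IsSol s) {u : α} (hu : u ∈ I.dom m) {i : {j : V // j ≠ m}}
    (hi : i ∉ I.supporters m s u) :
    ∃ v ∈ I.dom m, I.supporters m s u ⊂ I.supporters m s v := by
  obtain ⟨v, hv, hiv, hnoBT⟩ := h i i.2 (s i) (hs.1 i)
  refine ⟨v, hv, Set.ssubset_iff_of_subset (fun j hj => ?_) |>.2 ⟨i, hiv, hi⟩⟩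
  have hji : j ≠ i := by rintro rfl; exact hi hj
  by_contra hjv
  exact hnoBT j (Subtype.coe_ne_coe.2 hji) j.2 (s j) (hs.1 j) v u
    ⟨⟨i.2, j.2, Subtype.coe_ne_coe.2 hji.symm, hs.1 i, hs.1 j, hv, hu,
      hs.2 i j hji.symm, hiv, hj, hi, hjv⟩, Or.inl rfl⟩

theorem AEBTP.exists_forall_rel {s : {j : V // j ≠ m} → α} (h : AEBTP I m)
    (hs : (I.sub m).IsSol s) (hm : (I.dom m).Nonempty) :
    ∃ u ∈ I.dom m, ∀ j : {j : V // j ≠ m}, I.rel j m (s j) u := by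
  obtain ⟨u, hu, hmax⟩ := (I.finDom m).exists_maximalFor (I.supporters m s) _ hm
  refine ⟨u, hu, fun i => by_contra fun hi => ?_⟩
  obtain ⟨v, hv, hlt⟩ := h.supporters_ssubset hs hu hi
  exact hlt.2 (hmax hv hlt.1)

open Classical in
theorem IsSol.extend {s : {j : V // j ≠ m} → α} (hs : (I.sub m).IsSol s) {u : α}
    (hu : u ∈ I.dom m) (hrel : ∀ j : {j : V // j ≠ m}, I.rel j m (s j) u) :
    I.IsSol fun j => if hj : j = m then u else s ⟨j, hj⟩ := by
  refine ⟨fun j => ?_, fun i j hij => ?_⟩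
  · rcases eq_or_ne j m with rfl | hj
    · simpa using hu
    · simp only [dif_neg hj]; exact hs.1 ⟨j, hj⟩
  · rcases eq_or_ne i m with rfl | hi
    · simpa [hij.symm] using (I.symm _ _ _ _).1 (hrel ⟨j, hij.symm⟩)
    rcases eq_or_ne j m with rfl | hj
    · simpa [hi] using hrel ⟨i, hi⟩
    · simp only [dif_neg hi, dif_neg hj]
      exact hs.2 ⟨i, hi⟩ ⟨j, hj⟩ (Subtype.coe_ne_coe.1 hij)

theorem AEBTP_extend_general [Fintype V] (I : BinCSP V α) (m : V)
    (hcard : 2 ≤ Fintype.card V) (h : AEBTP I m)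
    (s' : {j : V // j ≠ m} → α) (hs' : (I.sub m).IsSol s') :
    ∃ s : V → α, I.IsSol s ∧ ∀ j (hj : j ≠ m), s j = s' ⟨j, hj⟩ := by
  obtain ⟨i, hi⟩ := Fintype.exists_ne_of_one_lt_card hcard m
  obtain ⟨v, hv, -⟩ := h i hi (s' ⟨i, hi⟩) (hs'.1 ⟨i, hi⟩)
  obtain ⟨u, hu, hrel⟩ := h.exists_forall_rel hs' ⟨v, hv⟩
  exact ⟨_, hs'.extend hu hrel, fun j hj => dif_neg hj⟩

/-- in an arc-consistent instance with at least 2 variables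
satisfying ∀∃BTP on `x_m`, every solution of the sub-instance on `X \ {x_m}`
extends to a solution of `I`. -/
theorem AEBTP_extend [Fintype V] (I : BinCSP V α) (m : V)
    (hcard : 2 ≤ Fintype.card V) (hac : ArcConsistent I) (h : AEBTP I m)
    (s' : {j : V // j ≠ m} → α) (hs' : (I.sub m).IsSol s') :
    ∃ s : V → α, I.IsSol s ∧ ∀ j (hj : j ≠ m), s j = s' ⟨j, hj⟩ :=
  AEBTP_extend_general I m hcard h s' hs'

end BinCSP
end

section
/- If a binary CSP instance satisfies the ∀∃ broken triangle property (∀∃BTP) on variable x_m, then it satisfies the BT-degree property on variable x_m. -/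
universe u v

namespace BinCSP

variable {V : Type u} {α : Type v}

/-- The set of variables `q` witnessing a broken triangle on `m` with base
containing `a ∈ dom p` and with `w` as one of the two apexes; its `ncard` is
the BT degree of the pair `(a, w)`. -/
def BTVars (I : BinCSP V α) (m p : V) (a w : α) : Set V :=
  {q | q ≠ p ∧ q ≠ m ∧ ∃ b ∈ I.dom q, ∃ w' ∈ I.dom m,
    (BrokenTri I m p q a b w w' ∨ BrokenTri I m p q a b w' w)}

/-- The consistent pair `⟨vi, vj⟩` is 3-safe on `m`: every broken triangle
`(u', vi, vj, u'')` has BT degree of `(vi, u'')` equal to one or BT degree of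
`(vj, u')` equal to one. -/
def ThreeSafe (I : BinCSP V α) (m i j : V) (vi vj : α) : Prop :=
  ∀ u' u'' : α, BrokenTri I m i j vi vj u' u'' →
    (BTVars I m i vi u'').ncard = 1 ∨ (BTVars I m j vj u').ncard = 1

/-- The BT-degree property on variable `m`. -/
def BTDegreeProp (I : BinCSP V α) (m : V) : Prop :=
  ∀ i j, i ≠ m → j ≠ m → i ≠ j → ∀ vi ∈ I.dom i, ∀ vj ∈ I.dom j,
    I.rel i j vi vj →
    ∃ vm ∈ I.dom m, I.rel i m vi vm ∧ I.rel j m vj vm ∧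
      (ThreeSafe I m i j vi vj ∨ (BTVars I m i vi vm).ncard = 0 ∨
        (BTVars I m j vj vm).ncard = 0)

/-- ∀∃BTP on `x_m` implies the BT-degree property on `x_m`. -/
theorem AEBTP_implies_BTDegree [Fintype V] (I : BinCSP V α) (m : V)
    (h : AEBTP I m) : BTDegreeProp I m := by
  intro i j him hjm hij vi hvi vj hvj hrel
  obtain ⟨am, ham, hiam, hA⟩ := h i him vi hvi
  obtain ⟨bm, hbm, hjbm, hB⟩ := h j hjm vj hvj
  by_cases hja : I.rel j m vj am
  · refine ⟨am, ham, hiam, hja, Or.inr (Or.inl ?_)⟩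
    have he : BTVars I m i vi am = ∅ := by
      ext q
      simp only [BTVars, Set.mem_setOf_eq, Set.mem_empty_iff_false, iff_false]
      rintro ⟨hqi, hqm, b, hb, w', hw', hbt⟩
      cases hbt with
      | inl hbt => exact hA q hqi hqm b hb am w' ⟨hbt, Or.inl rfl⟩
      | inr hbt => exact hA q hqi hqm b hb w' am ⟨hbt, Or.inr rfl⟩
    rw [he]; exact Set.ncard_empty _
  · by_cases hib : I.rel i m vi bm
    · refine ⟨bm, hbm, hib, hjbm, Or.inr (Or.inr ?_)⟩
      have he : BTVars I m j vj bm = ∅ := by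
        ext q
        simp only [BTVars, Set.mem_setOf_eq, Set.mem_empty_iff_false, iff_false]
        rintro ⟨hqj, hqm, b, hb, w', hw', hbt⟩
        cases hbt with
        | inl hbt => exact hB q hqj hqm b hb bm w' ⟨hbt, Or.inl rfl⟩
        | inr hbt => exact hB q hqj hqm b hb w' bm ⟨hbt, Or.inr rfl⟩
      rw [he]; exact Set.ncard_empty _
    · exfalso
      have hbt : BrokenTri I m i j vi vj am bm :=
        ⟨him, hjm, hij, hvi, hvj, ham, hbm, hrel, hiam, hjbm, hib, hja⟩
      exact hA j hij.symm hjm vj hvj am bm ⟨hbt, Or.inl rfl⟩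

end BinCSP
end

section
/- If a binary CSP instance satisfies the BT-degree property on variable x_m, then it satisfies the ∀∃ broken 3-dimensional polyhedron property on x_m. Consequently, in an instance with at least 3 variables, any solution of the sub-instance obtained by removing x_m extends to a solution of the whole instance. -/
universe u v

namespace BinCSP

variable {V : Type u} {α : Type v}

/-- A broken tetrahedron (broken 3-dimensional polyhedron) on variable `m`
with consistent base `⟨vi, vj, vk⟩` and distinct apexes `u, u', u''`. -/
def BrokenTetra (I : BinCSP V α) (m i j k : V) (vi vj vk u u' u'' : α) : Prop :=
  i ≠ m ∧ j ≠ m ∧ k ≠ m ∧ i ≠ j ∧ i ≠ k ∧ j ≠ k ∧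
    vi ∈ I.dom i ∧ vj ∈ I.dom j ∧ vk ∈ I.dom k ∧
    I.rel i j vi vj ∧ I.rel i k vi vk ∧ I.rel j k vj vk ∧
    u ∈ I.dom m ∧ u' ∈ I.dom m ∧ u'' ∈ I.dom m ∧ u ≠ u' ∧ u ≠ u'' ∧ u' ≠ u'' ∧
    I.rel i m vi u ∧ I.rel j m vj u ∧ ¬ I.rel k m vk u ∧
    I.rel i m vi u' ∧ ¬ I.rel j m vj u' ∧ I.rel k m vk u' ∧
    ¬ I.rel i m vi u'' ∧ I.rel j m vj u'' ∧ I.rel k m vk u''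

/-- The ∀∃ broken 3-dimensional polyhedron property on variable `m`. -/
def AEPoly3 (I : BinCSP V α) (m : V) : Prop :=
  ∀ i j, i ≠ m → j ≠ m → i ≠ j → ∀ vi ∈ I.dom i, ∀ vj ∈ I.dom j,
    I.rel i j vi vj →
    ∃ vm ∈ I.dom m, I.rel i m vi vm ∧ I.rel j m vj vm ∧
      ∀ k, k ≠ i → k ≠ j → k ≠ m → ∀ vk ∈ I.dom k, ∀ u u' u'' : α,
        ¬ (BrokenTetra I m i j k vi vj vk u u' u'' ∧ (vm = u ∨ vm = u' ∨ vm = u''))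

/-- Part 1: the BT-degree property implies the ∀∃ broken tetrahedron property. -/
lemma aePoly3_of_BTDegree [Fintype V] (I : BinCSP V α) (m : V)
    (h : BTDegreeProp I m) : AEPoly3 I m := by
  intro i j hi hj hij vi hvi vj hvj hr
  obtain ⟨vm, hvm, him, hjm, hcase⟩ := h i j hi hj hij vi hvi vj hvj hr
  refine ⟨vm, hvm, him, hjm, ?_⟩
  rintro k hki hkj hkm vk hvk u u' u'' ⟨ht, hor⟩
  obtain ⟨h1, h2, h3, h4, h5, h6, h7, h8, h9, h10, h11, h12, h13, h14, h15,
    h16, h17, h18, h19, h20, h21, h22, h23, h24, h25, h26, h27⟩ := ht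
  have hvmu : vm = u := by
    rcases hor with rfl | rfl | rfl
    · rfl
    · exact absurd hjm h23
    · exact absurd him h25
  subst hvmu
  -- k witnesses a broken triangle for both (vi, vm) and (vj, vm)
  have hkI : k ∈ BTVars I m i vi vm :=
    ⟨hki, hkm, vk, hvk, u'', h15,
      Or.inl ⟨h1, h3, h5, h7, h9, h13, h15, h11, h19, h27, h25, h21⟩⟩
  have hkJ : k ∈ BTVars I m j vj vm :=
    ⟨hkj, hkm, vk, hvk, u', h14,
      Or.inl ⟨h2, h3, h6, h8, h9, h13, h14, h12, h20, h24, h23, h21⟩⟩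
  rcases hcase with hts | hz | hz
  · have tri : BrokenTri I m i j vi vj u' u'' :=
      ⟨h1, h2, h4, h7, h8, h14, h15, h10, h22, h26, h25, h23⟩
    rcases hts u' u'' tri with hone | hone
    · have hjmem : j ∈ BTVars I m i vi u'' :=
        ⟨Ne.symm h4, hj, vj, hvj, u', h14, Or.inr tri⟩
      have hkmem : k ∈ BTVars I m i vi u'' :=
        ⟨hki, hkm, vk, hvk, vm, h13,
          Or.inr ⟨h1, h3, h5, h7, h9, h13, h15, h11, h19, h27, h25, h21⟩⟩
      have h2lt : 1 < (BTVars I m i vi u'').ncard :=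
        (Set.one_lt_ncard_iff (Set.toFinite _)).2 ⟨j, k, hjmem, hkmem, Ne.symm hkj⟩
      omega
    · have himem : i ∈ BTVars I m j vj u' :=
        ⟨h4, hi, vi, hvi, u'', h15,
          Or.inr ⟨h2, h1, Ne.symm h4, h8, h7, h15, h14, (I.symm i j vi vj).1 h10,
            h26, h22, h23, h25⟩⟩
      have hkmem : k ∈ BTVars I m j vj u' :=
        ⟨hkj, hkm, vk, hvk, vm, h13,
          Or.inr ⟨h2, h3, h6, h8, h9, h13, h14, h12, h20, h24, h23, h21⟩⟩
      have h2lt : 1 < (BTVars I m j vj u').ncard :=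
        (Set.one_lt_ncard_iff (Set.toFinite _)).2 ⟨i, k, himem, hkmem, Ne.symm hki⟩
      omega
  · rw [Set.ncard_eq_zero (Set.toFinite _)] at hz
    exact absurd (hz ▸ hkI) (Set.notMem_empty k)
  · rw [Set.ncard_eq_zero (Set.toFinite _)] at hz
    exact absurd (hz ▸ hkJ) (Set.notMem_empty k)

/-- Part 2: given the ∀∃ broken tetrahedron property, a consistent assignment
to all variables other than `m` has a common support at `m`. -/
lemma exists_common_support [Fintype V] (I : BinCSP V α) (m : V)
    (hA : AEPoly3 I m) (hcard : 3 ≤ Fintype.card V) (g : V → α)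
    (hdom : ∀ j, j ≠ m → g j ∈ I.dom j)
    (hrel : ∀ i j, i ≠ m → j ≠ m → i ≠ j → I.rel i j (g i) (g j)) :
    ∃ u ∈ I.dom m, ∀ p, p ≠ m → I.rel p m (g p) u := by
  classical
  -- two distinct variables different from m
  have h1card : 1 < Fintype.card V := by omega
  have : Nontrivial V := Fintype.one_lt_card_iff_nontrivial.mp h1card
  obtain ⟨p, hp⟩ := exists_ne m
  obtain ⟨q, hq⟩ : ∃ q, q ∉ ({p, m} : Finset V) := by
    by_contra hc
    push_neg at hc
    have hsub : (Finset.univ : Finset V) ⊆ {p, m} := fun x _ => hc x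
    have hle := Finset.card_le_card hsub
    have h2 : ({p, m} : Finset V).card ≤ 2 := Finset.card_insert_le p {m}
    rw [Finset.card_univ] at hle
    omega
  simp only [Finset.mem_insert, Finset.mem_singleton, not_or] at hq
  obtain ⟨hqp, hqm⟩ := hq
  obtain ⟨u₀, hu₀, hpu₀, hqu₀, -⟩ := hA p q hp hqm (Ne.symm hqp) (g p) (hdom p hp)
    (g q) (hdom q hqm) (hrel p q hp hqm (Ne.symm hqp))
  -- supports of a value at m
  set S : α → Set V := fun x => {r : V | r ≠ m ∧ I.rel r m (g r) x} with hS
  -- maximal support value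
  obtain ⟨u, hu, hmax⟩ := Set.exists_max_image (I.dom m) (fun x => (S x).ncard)
    (I.finDom m) ⟨u₀, hu₀⟩
  refine ⟨u, hu, ?_⟩
  by_contra hc
  push_neg at hc
  obtain ⟨i, hi, hiu⟩ := hc
  have hiu' : i ∉ S u := fun hh => hiu hh.2
  -- an ever-growing chain of supported variables: contradiction with finiteness
  have key : ∀ n : ℕ, ∃ (v : V) (T : Set V) (w : α), v ≠ m ∧ v ≠ i ∧ v ∈ T ∧
      T ⊆ S u ∧ T.ncard = n + 1 ∧ w ∈ I.dom m ∧ I.rel i m (g i) w ∧ T ⊆ S w ∧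
      (∀ b ∈ I.dom m, I.rel i m (g i) b → I.rel v m (g v) b → T ⊆ S b) ∧
      (∀ k, k ≠ i → k ≠ v → k ≠ m → ∀ vk ∈ I.dom k, ∀ a b c : α,
        ¬ (BrokenTetra I m i v k (g i) (g v) vk a b c ∧ (w = a ∨ w = b ∨ w = c))) := by
    intro n
    induction n with
    | zero =>
      have hSu0 : (S u₀).Nonempty := ⟨p, hp, hpu₀⟩
      have hpos : 0 < (S u).ncard := by
        have h1 : 0 < (S u₀).ncard := (Set.ncard_pos (Set.toFinite _)).2 hSu0
        have h2 := hmax u₀ hu₀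
        omega
      obtain ⟨j, hjS⟩ := (Set.ncard_pos (Set.toFinite _)).1 hpos
      have hjm : j ≠ m := hjS.1
      have hji : j ≠ i := fun e => hiu' (e ▸ hjS)
      obtain ⟨w, hw, hwi, hwj, hwT⟩ := hA i j hi hjm (Ne.symm hji) (g i)
        (hdom i hi) (g j) (hdom j hjm) (hrel i j hi hjm (Ne.symm hji))
      refine ⟨j, {j}, w, hjm, hji, rfl, Set.singleton_subset_iff.2 hjS,
        Set.ncard_singleton j, hw, hwi, Set.singleton_subset_iff.2 ⟨hjm, hwj⟩,
        fun b _ _ hjb => Set.singleton_subset_iff.2 ⟨hjm, hjb⟩, hwT⟩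
    | succ n ih =>
      obtain ⟨v, T, w, hvm, hvi, hvT, hTu, hTn, hwdom, hwi, hTw, hclos, hnt⟩ := ih
      have hex : ∃ v', v' ∈ S u ∧ v' ∉ S w := by
        by_contra hc2
        push_neg at hc2
        have hss : S u ⊂ S w :=
          ⟨fun x hx => hc2 x hx, fun hsub => hiu' (hsub ⟨hi, hwi⟩)⟩
        have hlt := Set.ncard_lt_ncard hss (Set.toFinite _)
        have hle := hmax w hwdom
        omega
      obtain ⟨v', hv'u, hv'w⟩ := hex
      have hv'm : v' ≠ m := hv'u.1
      have hv'i : v' ≠ i := fun e => hiu' (e ▸ hv'u)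
      have hv'v : v' ≠ v := fun e => hv'w (e ▸ hTw hvT)
      have hv'T : v' ∉ T := fun hh => hv'w (hTw hh)
      have hrule : ∀ b ∈ I.dom m, I.rel i m (g i) b → I.rel v' m (g v') b →
          I.rel v m (g v) b := by
        intro b hb hib hv'b
        by_contra hvb
        have hwv : I.rel v m (g v) w := (hTw hvT).2
        have hwv' : ¬ I.rel v' m (g v') w := fun hr => hv'w ⟨hv'm, hr⟩
        have tet : BrokenTetra I m i v v' (g i) (g v) (g v') w b u :=
          ⟨hi, hvm, hv'm, Ne.symm hvi, Ne.symm hv'i, Ne.symm hv'v,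
            hdom i hi, hdom v hvm, hdom v' hv'm,
            hrel i v hi hvm (Ne.symm hvi), hrel i v' hi hv'm (Ne.symm hv'i),
            hrel v v' hvm hv'm (Ne.symm hv'v),
            hwdom, hb, hu,
            fun e => hvb (e ▸ hwv), fun e => hiu (e ▸ hwi), fun e => hiu (e ▸ hib),
            hwi, hwv, hwv',
            hib, hvb, hv'b,
            hiu, (hTu hvT).2, hv'u.2⟩
        exact hnt v' hv'i hv'v hv'm (g v') (hdom v' hv'm) w b u ⟨tet, Or.inl rfl⟩
      obtain ⟨w', hw'dom, hw'i, hw'v', hw'nt⟩ := hA i v' hi hv'm (Ne.symm hv'i)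
        (g i) (hdom i hi) (g v') (hdom v' hv'm) (hrel i v' hi hv'm (Ne.symm hv'i))
      have hclos' : ∀ b ∈ I.dom m, I.rel i m (g i) b → I.rel v' m (g v') b →
          insert v' T ⊆ S b := by
        intro b hb hib hv'b
        exact Set.insert_subset ⟨hv'm, hv'b⟩ (hclos b hb hib (hrule b hb hib hv'b))
      refine ⟨v', insert v' T, w', hv'm, hv'i, Set.mem_insert _ _,
        Set.insert_subset hv'u hTu, ?_, hw'dom, hw'i,
        hclos' w' hw'dom hw'i hw'v', hclos', hw'nt⟩
      rw [Set.ncard_insert_of_notMem hv'T (Set.toFinite _), hTn]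
  obtain ⟨v, T, w, -, -, -, hTu, hTn, -⟩ := key (Fintype.card V)
  have hle : T.ncard ≤ Fintype.card V := by
    have := Set.ncard_le_ncard (Set.subset_univ T) Set.finite_univ
    rwa [Set.ncard_univ, Nat.card_eq_fintype_card] at this
  omega

/-- the BT-degree property on `x_m` implies the ∀∃ broken
3-dimensional polyhedron property on `x_m`; consequently, in an instance with
at least 3 variables, any solution of the sub-instance obtained by removing
`x_m` extends to a solution of the whole instance. -/
theorem BTDegree_implies_AEPoly3 [Fintype V] (I : BinCSP V α) (m : V)
    (h : BTDegreeProp I m) :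
    AEPoly3 I m ∧
    (3 ≤ Fintype.card V →
      ∀ s' : {j : V // j ≠ m} → α, (I.sub m).IsSol s' →
        ∃ s : V → α, I.IsSol s ∧ ∀ j (hj : j ≠ m), s j = s' ⟨j, hj⟩) := by
  classical
  have hA := aePoly3_of_BTDegree I m h
  refine ⟨hA, fun hcard s' hs' => ?_⟩
  have h1card : 1 < Fintype.card V := by omega
  have : Nontrivial V := Fintype.one_lt_card_iff_nontrivial.mp h1card
  obtain ⟨p, hp⟩ := exists_ne m
  set g : V → α := fun j => if hj : j = m then s' ⟨p, hp⟩ else s' ⟨j, hj⟩ with hgdef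
  have hg : ∀ j (hj : j ≠ m), g j = s' ⟨j, hj⟩ := fun j hj => dif_neg hj
  have hgdom : ∀ j, j ≠ m → g j ∈ I.dom j := by
    intro j hj
    rw [hg j hj]
    exact hs'.1 ⟨j, hj⟩
  have hgrel : ∀ i j, i ≠ m → j ≠ m → i ≠ j → I.rel i j (g i) (g j) := by
    intro i j hi hj hij
    rw [hg i hi, hg j hj]
    exact hs'.2 ⟨i, hi⟩ ⟨j, hj⟩ (fun e => hij (congrArg Subtype.val e))
  obtain ⟨u, hu, hsup⟩ := exists_common_support I m hA hcard g hgdom hgrel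
  refine ⟨fun j => if hj : j = m then u else s' ⟨j, hj⟩, ⟨?_, ?_⟩, ?_⟩
  · intro j
    by_cases hj : j = m
    · subst hj; simp only [dif_pos rfl]; exact hu
    · simp only [dif_neg hj]; exact hs'.1 ⟨j, hj⟩
  · intro a b hab
    by_cases ha : a = m
    · have hb : b ≠ m := fun e => hab (ha.trans e.symm)
      simp only [dif_pos ha, dif_neg hb]
      rw [ha, I.symm]
      have := hsup b hb
      rwa [hg b hb] at this
    · by_cases hb : b = m
      · simp only [dif_neg ha, dif_pos hb]
        rw [hb]
        have := hsup a ha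
        rwa [hg a ha] at this
      · simp only [dif_neg ha, dif_neg hb]
        exact hs'.2 ⟨a, ha⟩ ⟨b, hb⟩ (fun e => hab (congrArg Subtype.val e))
  · intro j hj
    simp only [dif_neg hj]

end BinCSP
end

section
/- In a binary CSP instance I, if variable x_p justifies the elimination of variable x_j by the triangle property (x_p → x_j) and x_j justifies the elimination of x_i (x_j → x_i), with p ≠ i, then x_p justifies the elimination of x_i in the instance I_{-j} obtained by removing variable x_j; the witnessing choice function is given by the composition u_{pi}(v_p) = u_{ji}(u_{pj}(v_p)). -/
universe u v

namespace BinCSP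

variable {V : Type u} {α : Type v}

/-- if `x_p` justifies the elimination of `x_j` (with choice
function `upj`) and `x_j` justifies the elimination of `x_i` (with choice
function `uji`) by the triangle property, with `p ≠ i`, then `x_p` justifies
the elimination of `x_i` in the sub-instance obtained by removing `x_j`, with
the composed choice function `v_p ↦ uji (upj v_p)`. -/
theorem justifies_trans (I : BinCSP V α) (p j i : V)
    (hpj : p ≠ j) (hji : j ≠ i) (hpi : p ≠ i)
    (upj uji : α → α)
    (hupj : ∀ vp ∈ I.dom p, upj vp ∈ I.dom j ∧ I.rel j p (upj vp) vp ∧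
      ∀ k, k ≠ j → k ≠ p → ∀ vk ∈ I.dom k, I.rel p k vp vk → I.rel j k (upj vp) vk)
    (huji : ∀ vj ∈ I.dom j, uji vj ∈ I.dom i ∧ I.rel i j (uji vj) vj ∧
      ∀ k, k ≠ i → k ≠ j → ∀ vk ∈ I.dom k, I.rel j k vj vk → I.rel i k (uji vj) vk) :
    ∀ vp ∈ I.dom p, uji (upj vp) ∈ I.dom i ∧ I.rel i p (uji (upj vp)) vp ∧
      ∀ k, k ≠ i → k ≠ p → k ≠ j → ∀ vk ∈ I.dom k,
        I.rel p k vp vk → I.rel i k (uji (upj vp)) vk := by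
  intro vp hvp
  obtain ⟨hdomj, hrjp, hC2pj⟩ := hupj vp hvp
  obtain ⟨hdomi, hrij, hC2ji⟩ := huji (upj vp) hdomj
  refine ⟨hdomi, ?_, ?_⟩
  · exact hC2ji p hpi hpj vp hvp hrjp
  · intro k hki hkp hkj vk hvk hpk
    exact hC2ji k hki hkj vk hvk (hC2pj k hkj hkp vk hvk hpk)

end BinCSP
end

section
/- Let I be a binary CSP instance and x_i, x_j distinct variables with x_i → x_j and x_j → x_i (each justifies the elimination of the other by the triangle property). Define F : D(x_i) → D(x_i) by F(v_i) = u_{ji}(u_{ij}(v_i)). Then for every v_i ∈ D(x_i), every x_k ∈ X \ {x_i, x_j}, every v_k ∈ D(x_k) and every t ∈ ℕ: (v_i, v_k) ∈ R_{ik} implies (F^t(v_i), v_k) ∈ R_{ik}. -/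
universe u v

namespace BinCSP

variable {V : Type u} {α : Type v}

/-- if `x_i → x_j` and `x_j → x_i` by the triangle property with
choice functions `uij`, `uji`, and `F = uji ∘ uij`, then compatibilities with
all other variables are preserved along all iterates of `F`. -/
theorem iterate_compat (I : BinCSP V α) (i j : V) (hij : i ≠ j)
    (uij uji : α → α)
    (huij : ∀ vi ∈ I.dom i, uij vi ∈ I.dom j ∧ I.rel j i (uij vi) vi ∧
      ∀ k, k ≠ j → k ≠ i → ∀ vk ∈ I.dom k, I.rel i k vi vk → I.rel j k (uij vi) vk)
    (huji : ∀ vj ∈ I.dom j, uji vj ∈ I.dom i ∧ I.rel i j (uji vj) vj ∧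
      ∀ k, k ≠ i → k ≠ j → ∀ vk ∈ I.dom k, I.rel j k vj vk → I.rel i k (uji vj) vk) :
    ∀ vi ∈ I.dom i, ∀ k, k ≠ i → k ≠ j → ∀ vk ∈ I.dom k, ∀ t : ℕ,
      I.rel i k vi vk → I.rel i k ((fun v => uji (uij v))^[t] vi) vk := by
  intro vi hvi k hki hkj vk hvk t
  -- strengthen: iterate stays in dom i and preserves rel i k
  induction t generalizing vi with
  | zero => intro h; simpa using h
  | succ n ih =>
    intro h
    rw [Function.iterate_succ_apply]
    have h1 := huij vi hvi
    have h2 := huji (uij vi) h1.1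
    exact ih (uji (uij vi)) h2.1
      (h2.2.2 k hki hkj vk hvk (h1.2.2 k hkj hki vk hvk h))

end BinCSP
end

section
/- Let I be a binary CSP instance with distinct variables x_i, x_j such that x_i → x_j and x_j → x_i by the triangle property, and let F(v_i) = u_{ji}(u_{ij}(v_i)) on D(x_i). If r ∈ ℕ satisfies F^r(v_i) = F^s(v_i) for some s > r, then every value F^t(v_i) with F^t(v_i) ≠ F^r(v_i) is neighbourhood substitutable by F^r(v_i) in the instance I_{-j} obtained by removing x_j. -/
universe u v

namespace BinCSP

variable {V : Type u} {α : Type v}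

/-- with `x_i → x_j`, `x_j → x_i` and `F = uji ∘ uij`, if
`F^r v_i = F^s v_i` with `r < s`, then every iterate `F^t v_i ≠ F^r v_i` is
neighbourhood substitutable by `F^r v_i` in the sub-instance obtained by
removing `x_j`. -/
theorem iterate_neighbourhood_subst (I : BinCSP V α) (i j : V) (hij : i ≠ j)
    (uij uji : α → α)
    (huij : ∀ vi ∈ I.dom i, uij vi ∈ I.dom j ∧ I.rel j i (uij vi) vi ∧
      ∀ k, k ≠ j → k ≠ i → ∀ vk ∈ I.dom k, I.rel i k vi vk → I.rel j k (uij vi) vk)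
    (huji : ∀ vj ∈ I.dom j, uji vj ∈ I.dom i ∧ I.rel i j (uji vj) vj ∧
      ∀ k, k ≠ i → k ≠ j → ∀ vk ∈ I.dom k, I.rel j k vj vk → I.rel i k (uji vj) vk)
    (vi : α) (hvi : vi ∈ I.dom i) (r s : ℕ) (hrs : r < s)
    (hcyc : (fun v => uji (uij v))^[r] vi = (fun v => uji (uij v))^[s] vi) :
    ∀ t : ℕ, (fun v => uji (uij v))^[t] vi ≠ (fun v => uji (uij v))^[r] vi →
      ∀ k, k ≠ i → k ≠ j → ∀ w ∈ I.dom k,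
        I.rel i k ((fun v => uji (uij v))^[t] vi) w →
        I.rel i k ((fun v => uji (uij v))^[r] vi) w := by
  intro t _ k hki hkj w hw hrel
  set F : α → α := fun v => uji (uij v) with hF
  have hdom : ∀ n, F^[n] vi ∈ I.dom i := by
    intro n
    induction n with
    | zero => simpa using hvi
    | succ n ih =>
      rw [Function.iterate_succ_apply']
      exact (huji _ ((huij _ ih).1)).1
  have hstep : ∀ n, I.rel i k (F^[n] vi) w → I.rel i k (F^[n+1] vi) w := by
    intro n h
    have h1 := huij _ (hdom n)
    have h2 : I.rel j k (uij (F^[n] vi)) w := h1.2.2 k hkj hki w hw h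
    have h3 := huji _ h1.1
    have := h3.2.2 k hki hkj w hw h2
    rw [Function.iterate_succ_apply']
    exact this
  have hiter : ∀ m n, I.rel i k (F^[n] vi) w → I.rel i k (F^[n+m] vi) w := by
    intro m
    induction m with
    | zero => intro n h; simpa only [Nat.add_zero] using h
    | succ m ih =>
      intro n h
      have := hstep (n+m) (ih n h)
      simpa only [Nat.add_succ] using this
  have hper : ∀ n : ℕ, F^[r + n*(s-r)] vi = F^[r] vi := by
    intro n
    induction n with
    | zero => simp only [Nat.zero_mul, Nat.add_zero]
    | succ n ih =>
      have : r + (n+1)*(s-r) = (n*(s-r)) + s := by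
        have : r + (s - r) = s := Nat.add_sub_cancel' hrs.le
        ring_nf
        omega
      rw [this, Function.iterate_add_apply, ← hcyc, ← Function.iterate_add_apply]
      rw [show n*(s-r) + r = r + n*(s-r) by ring, ih]
  have hle : t ≤ r + t*(s-r) := by
    have h1 : 1 ≤ s - r := by omega
    calc t ≤ t*(s-r) := Nat.le_mul_of_pos_right t (by omega)
      _ ≤ r + t*(s-r) := Nat.le_add_left _ _
  have := hiter (r + t*(s-r) - t) t hrel
  rw [show t + (r + t*(s-r) - t) = r + t*(s-r) by omega, hper t] at this
  exact this


end BinCSP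
end

section
/- Let I be an arc-consistent binary CSP instance satisfying the ∃snake property on variable x_i with witness value v_i. Then I is satisfiable if and only if the instance I' obtained from I by eliminating x_i is satisfiable. -/
universe u v

namespace BinCSP

variable {V : Type u} {α : Type v}

/-- The snake pattern does not occur on value `vi` for variable `i`
(the ∃snake condition for the witness `vi`). -/
def SnakeFree (I : BinCSP V α) (i : V) (vi : α) : Prop :=
  ∀ j, j ≠ i → ∀ vj ∈ I.dom j, ∀ vj' ∈ I.dom j, ∀ k, k ≠ i → k ≠ j →
    ∀ vk ∈ I.dom k,
      ¬ (¬ I.rel i j vi vj ∧ I.rel i j vi vj' ∧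
          I.rel j k vj vk ∧ ¬ I.rel j k vj' vk)

/-- in an arc-consistent instance satisfying the ∃snake property
on `x_i` with witness `vi`, eliminating `x_i` conserves satisfiability. -/
theorem exSnake_elim_sat (I : BinCSP V α) (i : V) (hac : ArcConsistent I)
    (vi : α) (hvi : vi ∈ I.dom i) (hsf : SnakeFree I i vi) :
    (∃ s : V → α, I.IsSol s) ↔
      ∃ t : {j : V // j ≠ i} → α, (I.elim i).IsSol t := by
  constructor
  · rintro ⟨s, hs1, hs2⟩
    exact ⟨fun j => s j.1,
      fun j => ⟨hs1 j.1, s i, hs1 i, hs2 j.1 i j.2⟩,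
      fun j k hjk => hs2 j.1 k.1 (fun h => hjk (Subtype.ext h))⟩
  · rintro ⟨t, ht1, ht2⟩
    classical
    choose w hw hwrel using fun (j : {j : V // j ≠ i}) => hac i j.1 (Ne.symm j.2) vi hvi
    set s : V → α := fun j =>
      if h : j = i then vi
      else if I.rel i j vi (t ⟨j, h⟩) then t ⟨j, h⟩ else w ⟨j, h⟩ with hsdef
    have hsj : ∀ j : {j : V // j ≠ i}, s j.1 = if I.rel i j.1 vi (t j) then t j else w j := by
      intro j
      simp only [hsdef, dif_neg j.2]
    have hmem : ∀ j : {j : V // j ≠ i}, s j.1 ∈ I.dom j.1 := by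
      intro j
      rw [hsj j]
      split
      · exact (ht1 j).1
      · exact hw j
    have hcomp : ∀ j : {j : V // j ≠ i}, I.rel i j.1 vi (s j.1) := by
      intro j
      rw [hsj j]
      split
      · assumption
      · exact hwrel j
    have hpres : ∀ j : {j : V // j ≠ i}, ∀ k, k ≠ i → k ≠ j.1 → ∀ vk ∈ I.dom k,
        I.rel j.1 k (t j) vk → I.rel j.1 k (s j.1) vk := by
      intro j k hki hkj vk hvk hrel
      rw [hsj j]
      split
      · exact hrel
      · rename_i hnot
        by_contra hcon
        exact hsf j.1 j.2 (t j) (ht1 j).1 (w j) (hw j) k hki hkj vk hvk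
          ⟨hnot, hwrel j, hrel, hcon⟩
    refine ⟨s, fun j => ?_, fun j k hjk => ?_⟩
    · by_cases h : j = i
      · subst h; simpa [hsdef] using hvi
      · exact hmem ⟨j, h⟩
    · by_cases hj : j = i
      · subst hj
        have hk : k ≠ j := fun h => hjk h.symm
        simpa [hsdef] using hcomp ⟨k, hk⟩
      · by_cases hk : k = i
        · subst hk
          have h1 : I.rel k j vi (s j) := hcomp ⟨j, hj⟩
          have h2 : I.rel j k (s j) vi := (I.symm k j _ _).mp h1
          simpa [hsdef] using h2
        · -- both ≠ i
          have h1 : I.rel j k (t ⟨j, hj⟩) (t ⟨k, hk⟩) :=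
            ht2 ⟨j, hj⟩ ⟨k, hk⟩ (fun h => hjk (congrArg Subtype.val h))
          have h2 : I.rel j k (s j) (t ⟨k, hk⟩) :=
            hpres ⟨j, hj⟩ k hk (Ne.symm hjk) (t ⟨k, hk⟩) (ht1 ⟨k, hk⟩).1 h1
          have h3 : I.rel k j (t ⟨k, hk⟩) (s j) := (I.symm j k _ _).mp h2
          have h4 : I.rel k j (s k) (s j) :=
            hpres ⟨k, hk⟩ j hj hjk (s j) (hmem ⟨j, hj⟩) h3
          exact (I.symm k j _ _).mp h4

end BinCSP
end
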